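/- arXiv:2001.06411 — 2 statements merged into one kernel-verified Lean document; each statement's English description precedes it below -/
import Mathlib

section
/- Let x, z be vertices of DL_d(q) with h_i(z) = 0 for all i, and suppose m_i(z) ≠ m_i(x) for every i with m_i(x) ≠ 0. Set c_i = max{0, m_i(z) − m_i(x)}. Then d(x,z) ≥ d(x,id) + Σ_{i=1}^d c_i. -/
open Finset

/-- A vertex of the oriented (q+1)-valent tree `T` underlying Diestel–Leader graphs:
descend `m` edges from the basepoint `o` along its ancestor ray (whose edges all
carry the label `0`), then ascend along the edge labels listed in `w`.
The normalization condition (if `m ≠ 0`, the first label of `w` is not `0`)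
makes this representation unique. -/
structure TreeVertex (q : ℕ) where
  m : ℕ
  w : List (Fin q)
  norm : ∀ a t, m ≠ 0 → w = a :: t → (a : ℕ) ≠ 0

namespace TreeVertex

variable {q : ℕ}

/-- the basepoint `o` of the tree -/
def o (q : ℕ) : TreeVertex q := ⟨0, [], fun _ _ h _ => absurd rfl h⟩

/-- `l v = d(v, o ⋏ v)` -/
def l (v : TreeVertex q) : ℕ := v.w.length

/-- the height function `h = l - m` -/
def h (v : TreeVertex q) : ℤ := (v.l : ℤ) - (v.m : ℤ)

/-- length of the longest common prefix of two lists -/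
def cpl : List (Fin q) → List (Fin q) → ℕ
  | a :: s, b :: t => if a = b then cpl s t + 1 else 0
  | _, _ => 0

/-- `mPair x y = d(x, x ⋏ y)`, the distance from `x` to the greatest common
ancestor of `x` and `y`. -/
def mPair (x y : TreeVertex q) : ℕ :=
  if x.m < y.m then x.l + (y.m - x.m)
  else if y.m < x.m then x.l
  else x.l - cpl x.w y.w

/-- the graph distance in the tree -/
def dist (x y : TreeVertex q) : ℕ := mPair x y + mPair y x

end TreeVertex

/-- The Diestel–Leader graph `DL_d(q)`: `d`-tuples of tree vertices whose heights
sum to `0`. -/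
structure DL (d q : ℕ) where
  t : Fin d → TreeVertex q
  hsum : ∑ i, (t i).h = 0

namespace DL

variable {d q : ℕ}

/-- the basepoint `id` of `DL_d(q)` -/
def id0 (d q : ℕ) : DL d q :=
  ⟨fun _ => TreeVertex.o q, by simp [TreeVertex.h, TreeVertex.o, TreeVertex.l]⟩

/-- the pairwise coordinate `m_i(x,y) = d_i(p_i x, p_i x ⋏ p_i y)` -/
def mm (x y : DL d q) (i : Fin d) : ℕ := TreeVertex.mPair (x.t i) (y.t i)

/-- the pairwise coordinate `l_i(x,y) = d_i(p_i y, p_i x ⋏ p_i y)` -/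
def ll (x y : DL d q) (i : Fin d) : ℕ := TreeVertex.mPair (y.t i) (x.t i)

/-- the coordinate `m_i(x)` -/
def mc (x : DL d q) (i : Fin d) : ℕ := (x.t i).m

/-- the coordinate `l_i(x)` -/
def lc (x : DL d q) (i : Fin d) : ℕ := (x.t i).l

/-- the height coordinate `h_i(x) = l_i(x) - m_i(x)` -/
def hc (x : DL d q) (i : Fin d) : ℤ := (x.t i).h

/-- The Stein–Taback quantity `f_{σ,i}` (here `i` is 1-based, `2 ≤ i ≤ d`):
`f_{σ,i} = m_{σ(1)} + ⋯ + m_{σ(i)} + l_{σ(i)} + ⋯ + l_{σ(d)}` for `2 ≤ i ≤ d-1`,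
and `f_{σ,d} = 2m_{σ(1)} + m_{σ(2)} + ⋯ + m_{σ(d)} + l_{σ(d)}`. -/
def fST {d : ℕ} (m l : Fin d → ℕ) (σ : Equiv.Perm (Fin d)) (i : ℕ) : ℕ :=
  if i = d then
    (∑ j, m (σ j)) + (∑ j ∈ univ.filter fun j : Fin d => (j : ℕ) = 0, m (σ j))
      + (∑ j ∈ univ.filter fun j : Fin d => (j : ℕ) = d - 1, l (σ j))
  else
    (∑ j ∈ univ.filter fun j : Fin d => (j : ℕ) + 1 ≤ i, m (σ j))
      + (∑ j ∈ univ.filter fun j : Fin d => i ≤ (j : ℕ) + 1, l (σ j))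

/-- The distance on `DL_d(q)`, via the Stein–Taback formula
`d(x,y) = min_{σ ∈ Σ_d} max_{2 ≤ i ≤ d} f_{σ,i}(x,y)`. -/
noncomputable def dist (x y : DL d q) : ℕ :=
  ⨅ σ : Equiv.Perm (Fin d), ⨆ i ∈ Finset.Icc 2 d, fST (mm x y) (ll x y) σ i

end DL

/-!
Since `h_i(z) = 0`, either `z_i = o_i` or `m_i(z) ≠ m_i(x)`; in both cases `x_i ⋏ z_i` lies on
the ancestor ray of `o_i` at depth `max(m_i(x), m_i(z))`, which gives
`m_i(x,z) ≥ l_i(x) + c_i = m_i(x,id) + c_i` and `l_i(x,z) ≥ m_i(x) + c_i = l_i(x,id) + c_i`.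
Every Stein–Taback quantity `f_{σ,i}` contains each index at least once, so it grows by at
least `Σ c_i` from `(x,id)` to `(x,z)`, and this passes through the `max` over `i` and the
`min` over `σ`.
-/

namespace TreeVertex

variable {q : ℕ}

theorem cpl_nil_right (w : List (Fin q)) : cpl w [] = 0 := by
  cases w <;> rfl

theorem cpl_nil_left (w : List (Fin q)) : cpl [] w = 0 := by
  cases w <;> rfl

theorem mPair_o_right (v : TreeVertex q) : mPair v (o q) = v.l := by
  simp only [mPair, o]
  split_ifs <;> simp_all [cpl_nil_right]

theorem mPair_o_left (v : TreeVertex q) : mPair (o q) v = v.m := by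
  simp only [mPair, o, l]
  split_ifs <;> simp_all [cpl_nil_left]

theorem l_eq_m_of_h_eq_zero {v : TreeVertex q} (hv : v.h = 0) : v.l = v.m := by
  simp only [h] at hv
  omega

theorem l_add_sub_le_mPair {u v : TreeVertex q} (hv : v.h = 0) (hne : u.m ≠ 0 → v.m ≠ u.m) :
    u.l + (v.m - u.m) ≤ mPair u v := by
  have hvl := l_eq_m_of_h_eq_zero hv
  unfold mPair
  split_ifs
  · omega
  · omega
  · have hvw : v.w = [] := List.length_eq_zero_iff.mp (by simp only [l] at hvl; omega)
    rw [hvw, cpl_nil_right]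
    omega

theorem m_add_sub_le_mPair {u v : TreeVertex q} (hv : v.h = 0) (hne : u.m ≠ 0 → v.m ≠ u.m) :
    u.m + (v.m - u.m) ≤ mPair v u := by
  have hvl := l_eq_m_of_h_eq_zero hv
  unfold mPair
  split_ifs <;> omega

end TreeVertex

theorem biSup_add_le_biSup {ι α : Type*} [ConditionallyCompleteLinearOrderBot α] [Add α]
    {s : Finset ι} (hs : s.Nonempty) {g g' : ι → α} {C : α} (h : ∀ i ∈ s, g i + C ≤ g' i) :
    (⨆ i ∈ s, g i) + C ≤ ⨆ i ∈ s, g' i := by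
  obtain ⟨i, hi, hgi⟩ := Finset.mem_image.1 (hs.ciSup_mem_image g)
  have hbdd : BddAbove (⋃ j, Set.range fun _ : j ∈ s => g' j) := by
    refine ⟨s.sup g', ?_⟩
    rintro _ ⟨_, ⟨j, rfl⟩, ⟨hj, rfl⟩⟩
    exact le_sup hj
  rw [← hgi]
  exact (h i hi).trans (le_ciSup₂ (f := fun j (_ : j ∈ s) => g' j) hbdd i hi)

theorem sum_add_sum_add_sum_le_of_cover {ι : Type*} [Fintype ι] [DecidableEq ι]
    {A B : Finset ι} (hAB : ∀ j, j ∈ A ∨ j ∈ B) {f g f' g' c : ι → ℕ}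
    (hf : ∀ j, f j + c j ≤ f' j) (hg : ∀ j, g j + c j ≤ g' j) :
    ∑ j ∈ A, f j + ∑ j ∈ B, g j + ∑ j, c j ≤ ∑ j ∈ A, f' j + ∑ j ∈ B, g' j := by
  have hc : ∑ j, c j ≤ ∑ j ∈ A, c j + ∑ j ∈ B, c j := by
    rw [← sum_union_inter]
    refine le_trans (sum_le_sum_of_subset fun j _ => ?_) (Nat.le_add_right _ _)
    simpa only [mem_union] using hAB j
  have hA : ∑ j ∈ A, (f j + c j) ≤ ∑ j ∈ A, f' j := sum_le_sum fun j _ => hf j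
  have hB : ∑ j ∈ B, (g j + c j) ≤ ∑ j ∈ B, g' j := sum_le_sum fun j _ => hg j
  rw [sum_add_distrib] at hA hB
  omega

namespace DL

variable {d q : ℕ}

theorem mm_id0 (x : DL d q) : mm x (id0 d q) = lc x :=
  funext fun i => TreeVertex.mPair_o_right (x.t i)

theorem ll_id0 (x : DL d q) : ll x (id0 d q) = mc x :=
  funext fun i => TreeVertex.mPair_o_left (x.t i)

theorem fST_add_sum_le {m l m' l' c : Fin d → ℕ}
    (hm : ∀ j, m j + c j ≤ m' j) (hl : ∀ j, l j + c j ≤ l' j) (σ : Equiv.Perm (Fin d)) (i : ℕ) :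
    fST m l σ i + ∑ j, c j ≤ fST m' l' σ i := by
  rw [← Equiv.sum_comp σ c]
  unfold fST
  split_ifs
  · have hcover := sum_add_sum_add_sum_le_of_cover (A := univ)
      (B := univ.filter fun j : Fin d => (j : ℕ) = d - 1)
      (fun j => .inl (mem_univ j)) (fun j => hm (σ j)) (fun j => hl (σ j))
    have hfirst : ∑ j ∈ univ.filter (fun j : Fin d => (j : ℕ) = 0), m (σ j)
        ≤ ∑ j ∈ univ.filter (fun j : Fin d => (j : ℕ) = 0), m' (σ j) :=
      sum_le_sum fun j _ => (Nat.le_add_right _ _).trans (hm (σ j))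
    omega
  · exact sum_add_sum_add_sum_le_of_cover
      (fun j => by simp only [mem_filter, mem_univ, true_and]; omega)
      (fun j => hm (σ j)) (fun j => hl (σ j))

theorem dist_add_sum_le_dist (hd : 2 ≤ d) {x y z : DL d q} {c : Fin d → ℕ}
    (hm : ∀ j, mm x y j + c j ≤ mm x z j) (hl : ∀ j, ll x y j + c j ≤ ll x z j) :
    dist x y + ∑ j, c j ≤ dist x z := by
  refine le_ciInf fun σ => le_trans (Nat.add_le_add_right (ciInf_le (OrderBot.bddBelow _) σ) _) ?_
  exact biSup_add_le_biSup ⟨2, mem_Icc.2 ⟨le_rfl, hd⟩⟩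
    fun i _ => fST_add_sum_le hm hl σ i

end DL

/-- Let `x, z` be vertices of `DL_d(q)` with `h_i(z) = 0` for
all `i`, and suppose `m_i(z) ≠ m_i(x)` for every `i` with `m_i(x) ≠ 0`.  Set
`c_i = max {0, m_i(z) - m_i(x)}` (here realized by truncated subtraction).
Then `d(x,z) ≥ d(x, id) + Σ_i c_i`. -/
theorem dist_ge_dist_id_add {d q : ℕ} (hd : 2 ≤ d) (x z : DL d q)
    (hz : ∀ i, DL.hc z i = 0)
    (hne : ∀ i, DL.mc x i ≠ 0 → DL.mc z i ≠ DL.mc x i) :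
    DL.dist x (DL.id0 d q) + ∑ i, (DL.mc z i - DL.mc x i) ≤ DL.dist x z := by
  refine DL.dist_add_sum_le_dist hd (fun i => ?_) (fun i => ?_)
  · rw [DL.mm_id0]
    exact TreeVertex.l_add_sub_le_mPair (hz i) (hne i)
  · rw [DL.ll_id0]
    exact TreeVertex.m_add_sub_le_mPair (hz i) (hne i)
end

section
/- Let z ∈ DL_3(q) have m_1(z) = m_2(z) = 0 and l_1(z) > 0. Let ν = ν^{1,ε}_1 where ε differs from the label of the first edge from o_1 toward p_1(z). Then d(z,ν) ≥ d(z,id), while β(ν) = −1; hence d(z,ν) − d(z,id) ≠ β(ν). -/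
open Finset

namespace DL3

/-- the label `1` (requires `2 ≤ q`) -/
def one (q : ℕ) (hq : 2 ≤ q) : Fin q := ⟨1, by omega⟩

/-- the tree vertex at depth `k` obtained by descending `k` edges from `o` and
ascending `k` edges all labeled `1`; it satisfies `m = l = k`, `h = 0`. -/
def ray (q : ℕ) (hq : 2 ≤ q) (k : ℕ) : TreeVertex q :=
  ⟨k, List.replicate k (one q hq), by
    intro a t _ hw
    cases k with
    | zero => simp at hw
    | succ n =>
      rw [List.replicate_succ] at hw
      have : a = one q hq := (List.cons.injEq _ _ _ _).mp hw |>.1.symm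
      simp [this, one]⟩

/-- the point `ζ^i_k ∈ DL_3(q)`: `m_i = l_i = k` (upward edges labeled `1`),
all other coordinates trivial -/
def zeta (q : ℕ) (hq : 2 ≤ q) (i : Fin 3) (k : ℕ) : DL 3 q :=
  ⟨fun j => if j = i then ray q hq k else TreeVertex.o q, by
    have h0 : ∀ j : Fin 3, ((if j = i then ray q hq k else TreeVertex.o q) : TreeVertex q).h = 0 := by
      intro j
      split <;> simp [TreeVertex.h, TreeVertex.l, ray, TreeVertex.o]
    simp [h0]⟩

/-- the sequence `β_n`: `m_3(β_n) = l_3(β_n) = n` along edges labeled `1`,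
trivial in the first two trees -/
def beta (q : ℕ) (hq : 2 ≤ q) (n : ℕ) : DL 3 q := zeta q hq 2 n

/-- the sequence `α_n`: `l_1(α_n) = n` (upward edges labeled `1`),
`m_2(α_n) = n`, all other coordinates trivial -/
def alpha (q : ℕ) (hq : 2 ≤ q) (n : ℕ) : DL 3 q :=
  ⟨![⟨0, List.replicate n (one q hq), fun _ _ h _ => absurd rfl h⟩,
     ⟨n, [], by intro a t _ hw; simp at hw⟩,
     TreeVertex.o q], by
    simp [Fin.sum_univ_three, TreeVertex.h, TreeVertex.l, TreeVertex.o]⟩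

/-- the point `ν^{j,ε}_k` (`j ∈ {1,2}`): ascend `k` edges labeled `ε` in tree `j`,
descend `k` edges in tree `3`; so `l_j = k`, `m_3 = k`, all else trivial. -/
def nu (q : ℕ) (j : Fin 2) (ε : Fin q) (k : ℕ) : DL 3 q :=
  ⟨fun i =>
      if i = Fin.castLE (by omega) j then ⟨0, List.replicate k ε, fun _ _ h _ => absurd rfl h⟩
      else if i = 2 then ⟨k, [], by intro a t _ hw; simp at hw⟩
      else TreeVertex.o q, by
    fin_cases j <;>
      simp [Fin.sum_univ_three, TreeVertex.h, TreeVertex.l, TreeVertex.o]⟩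

/-- the horofunction `β` of `DL_3(q)`:
`β(z) = m_1 + m_2 + min_{j=1,2} {m_j + h_3, h_j + h_3, l_j}` -/
def betaFn {q : ℕ} (w : DL 3 q) : ℤ :=
  (DL.mc w 0 : ℤ) + DL.mc w 1 +
    min ((DL.mc w 0 : ℤ) + DL.hc w 2)
      (min (DL.hc w 0 + DL.hc w 2)
        (min (DL.lc w 0 : ℤ)
          (min ((DL.mc w 1 : ℤ) + DL.hc w 2)
            (min (DL.hc w 1 + DL.hc w 2) (DL.lc w 1 : ℤ)))))

end DL3

open DL3

lemma cpl_nil_right {q : ℕ} (s : List (Fin q)) : TreeVertex.cpl s [] = 0 := by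
  cases s <;> rfl

lemma fST2_eq (m l : Fin 3 → ℕ) (σ : Equiv.Perm (Fin 3)) :
    DL.fST m l σ 2 = m (σ 0) + m (σ 1) + (l (σ 1) + l (σ 2)) := by
  rw [DL.fST, if_neg (by norm_num), Finset.sum_filter, Finset.sum_filter]
  simp [Fin.sum_univ_three]

lemma fST3_eq (m l : Fin 3 → ℕ) (σ : Equiv.Perm (Fin 3)) :
    DL.fST m l σ 3 = m (σ 0) + m (σ 1) + m (σ 2) + m (σ 0) + l (σ 2) := by
  rw [DL.fST, if_pos rfl, Finset.sum_filter, Finset.sum_filter]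
  simp [Fin.sum_univ_three]

lemma key_perm (m l : Fin 3 → ℕ) (T : ℕ)
    (h : ∀ a b c : Fin 3, a ≠ b → a ≠ c → b ≠ c →
      T ≤ max (m a + m b + (l b + l c)) (m a + m b + m c + m a + l c))
    (σ : Equiv.Perm (Fin 3)) :
    T ≤ max (DL.fST m l σ 2) (DL.fST m l σ 3) := by
  rw [fST2_eq, fST3_eq]
  exact h _ _ _ (fun hh => by simpa using σ.injective hh)
    (fun hh => by simpa using σ.injective hh) (fun hh => by simpa using σ.injective hh)
lemma biSup_Icc23 (f : ℕ → ℕ) : (⨆ i ∈ Finset.Icc 2 3, f i) = max (f 2) (f 3) := by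
  have hb : BddAbove (Set.range fun i => ⨆ _ : i ∈ Finset.Icc 2 3, f i) := by
    refine ⟨max (f 2) (f 3), ?_⟩
    rintro x ⟨i, rfl⟩
    by_cases h : i ∈ Finset.Icc 2 3
    · obtain ⟨h1, h2⟩ : 2 ≤ i ∧ i ≤ 3 := by simpa [Finset.mem_Icc] using h
      interval_cases i <;> simp [h]
    · simp [h]
  apply le_antisymm
  · apply ciSup_le; intro i
    by_cases h : i ∈ Finset.Icc 2 3
    · obtain ⟨h1, h2⟩ : 2 ≤ i ∧ i ≤ 3 := by simpa [Finset.mem_Icc] using h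
      interval_cases i <;> simp [h]
    · simp [h]
  · refine max_le ?_ ?_
    · have h2 : (2:ℕ) ∈ Finset.Icc 2 3 := by decide
      calc f 2 = ⨆ _ : (2:ℕ) ∈ Finset.Icc 2 3, f 2 := by simp [h2]
        _ ≤ _ := le_ciSup hb 2
    · have h3 : (3:ℕ) ∈ Finset.Icc 2 3 := by decide
      calc f 3 = ⨆ _ : (3:ℕ) ∈ Finset.Icc 2 3, f 3 := by simp [h3]
        _ ≤ _ := le_ciSup hb 3

/-- Let `z ∈ DL_3(q)` have `m_1(z) = m_2(z) = 0` and
`l_1(z) > 0`.  Let `ν = ν^{1,ε}_1` where the label `ε` differs from the label of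
the first edge from `o_1` toward `p_1(z)`.  Then `d(z,ν) ≥ d(z,id)`, while
`β(ν) = -1`; hence `d(z,ν) - d(z,id) ≠ β(ν)`. -/
theorem dist_nu_ne_betaFn {q : ℕ} (hq : 2 ≤ q) (z : DL 3 q) (ε : Fin q)
    (hm1 : DL.mc z 0 = 0) (hm2 : DL.mc z 1 = 0) (hl1 : 0 < DL.lc z 0)
    (hε : (z.t 0).w.head? ≠ some ε) :
    DL.dist z (DL.id0 3 q) ≤ DL.dist z (nu q 0 ε 1) ∧
    betaFn (nu q 0 ε 1) = -1 ∧
    (DL.dist z (nu q 0 ε 1) : ℤ) - (DL.dist z (DL.id0 3 q) : ℤ) ≠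
      betaFn (nu q 0 ε 1) := by
  set L1 := DL.lc z 0 with hL1
  set L2 := DL.lc z 1 with hL2
  set L3 := DL.lc z 2 with hL3
  -- height sum
  have hM : DL.mc z 2 = L1 + L2 + L3 := by
    have := z.hsum
    rw [Fin.sum_univ_three] at this
    simp only [TreeVertex.h] at this
    have h0 : (z.t 0).m = 0 := hm1
    have h1 : (z.t 1).m = 0 := hm2
    rw [h0, h1] at this
    simp only [DL.mc, DL.lc, TreeVertex.l] at *
    omega
  have hm3 : 0 < DL.mc z 2 := by omega
  have hm3' : 0 < (z.t 2).m := hm3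
  have h0 : (z.t 0).m = 0 := hm1
  have h1 : (z.t 1).m = 0 := hm2
  -- nu components
  have ht0 : (nu q 0 ε 1).t 0 = ⟨0, [ε], fun _ _ h _ => absurd rfl h⟩ := by
    simp [nu, Fin.castLE]
  have ht1 : (nu q 0 ε 1).t 1 = TreeVertex.o q := by
    simp [nu, Fin.castLE]
  have ht2 : (nu q 0 ε 1).t 2 = ⟨1, [], by intro a t _ hw; simp at hw⟩ := by
    simp [nu, Fin.castLE]
  -- coordinates wrt id
  have i0m : DL.mm z (DL.id0 3 q) 0 = L1 := by
    simp [DL.mm, DL.id0, TreeVertex.mPair, TreeVertex.o, h0, DL.lc, hL1, cpl_nil_right]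
  have i0l : DL.ll z (DL.id0 3 q) 0 = 0 := by
    simp [DL.ll, DL.id0, TreeVertex.mPair, TreeVertex.o, TreeVertex.l, h0, TreeVertex.cpl]
  have i1m : DL.mm z (DL.id0 3 q) 1 = L2 := by
    simp [DL.mm, DL.id0, TreeVertex.mPair, TreeVertex.o, h1, DL.lc, hL2, cpl_nil_right]
  have i1l : DL.ll z (DL.id0 3 q) 1 = 0 := by
    simp [DL.ll, DL.id0, TreeVertex.mPair, TreeVertex.o, TreeVertex.l, h1, TreeVertex.cpl]
  have i2m : DL.mm z (DL.id0 3 q) 2 = L3 := by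
    simp [DL.mm, DL.id0, TreeVertex.mPair, TreeVertex.o, DL.lc,
      show ¬ (z.t 2).m < 0 by omega, hm3', show ¬ (z.t 2).m = 0 by omega]
    rfl
  have i2l : DL.ll z (DL.id0 3 q) 2 = DL.mc z 2 := by
    simp [DL.ll, DL.mc, DL.id0, TreeVertex.mPair, TreeVertex.o, TreeVertex.l, hm3']
  -- coordinates wrt nu
  obtain ⟨a, t, hw⟩ : ∃ a t, (z.t 0).w = a :: t := by
    cases hw : (z.t 0).w with
    | nil => rw [hL1, DL.lc, TreeVertex.l, hw] at hl1; simp at hl1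
    | cons a t => exact ⟨a, t, rfl⟩
  have ha : a ≠ ε := by rw [hw] at hε; simpa using hε
  have n0m : DL.mm z (nu q 0 ε 1) 0 = L1 := by
    simp [DL.mm, ht0, TreeVertex.mPair, h0, DL.lc, TreeVertex.l, hw, TreeVertex.cpl, ha, hL1]
  have n0l : DL.ll z (nu q 0 ε 1) 0 = 1 := by
    simp [DL.ll, ht0, TreeVertex.mPair, h0, TreeVertex.l, hw, TreeVertex.cpl, Ne.symm ha]
  have n1m : DL.mm z (nu q 0 ε 1) 1 = L2 := by
    simp [DL.mm, ht1, TreeVertex.mPair, TreeVertex.o, h1, DL.lc, hL2, cpl_nil_right]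
  have n1l : DL.ll z (nu q 0 ε 1) 1 = 0 := by
    simp [DL.ll, ht1, TreeVertex.mPair, TreeVertex.o, TreeVertex.l, h1, TreeVertex.cpl]
  have n2m : DL.mm z (nu q 0 ε 1) 2 = L3 := by
    rcases Nat.lt_or_ge 1 (z.t 2).m with h | h
    · simp [DL.mm, ht2, TreeVertex.mPair, DL.lc, h, show ¬ (z.t 2).m = 0 by omega]
      rfl
    · have h1' : (z.t 2).m = 1 := by omega
      simp [DL.mm, ht2, TreeVertex.mPair, DL.lc, TreeVertex.l, h1', cpl_nil_right]
      rfl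
  have n2l : DL.ll z (nu q 0 ε 1) 2 = DL.mc z 2 - 1 := by
    rcases Nat.lt_or_ge 1 (z.t 2).m with h | h
    · simp [DL.ll, DL.mc, ht2, TreeVertex.mPair, h, TreeVertex.l]
    · have h1' : (z.t 2).m = 1 := by omega
      simp [DL.ll, DL.mc, ht2, TreeVertex.mPair, h1', TreeVertex.l, TreeVertex.cpl]
  have hl1' : 0 < L1 := hl1
  -- the target value
  set T := L1 + L2 + 2 * L3 with hT
  -- upper bound for d(z, id)
  have hub : DL.dist z (DL.id0 3 q) ≤ T := by
    rw [DL.dist]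
    refine le_trans (ciInf_le (OrderBot.bddBelow _) (Equiv.swap 0 2)) ?_
    rw [biSup_Icc23, fST2_eq, fST3_eq]
    have e0 : (Equiv.swap (0:Fin 3) 2) 0 = 2 := by decide
    have e1 : (Equiv.swap (0:Fin 3) 2) 1 = 1 := by decide
    have e2 : (Equiv.swap (0:Fin 3) 2) 2 = 0 := by decide
    rw [e0, e1, e2, i0m, i0l, i1m, i1l, i2m, sup_le_iff]
    constructor <;> omega
  -- lower bound for d(z, nu)
  have hlb : T ≤ DL.dist z (nu q 0 ε 1) := by
    rw [DL.dist]
    refine le_ciInf fun σ => ?_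
    rw [biSup_Icc23]
    refine key_perm _ _ _ ?_ σ
    intro x y c hxy hxc hyc
    fin_cases x <;> fin_cases y <;> fin_cases c <;>
      simp_all [n0m, n0l, n1m, n1l, n2m, n2l] <;> omega
  have hbeta : betaFn (nu q 0 ε 1) = -1 := by
    simp [betaFn, nu, DL.mc, DL.lc, DL.hc, TreeVertex.h, TreeVertex.l, TreeVertex.o,
      Fin.castLE]
  have hle : DL.dist z (DL.id0 3 q) ≤ DL.dist z (nu q 0 ε 1) := le_trans hub hlb
  exact ⟨hle, hbeta, by rw [hbeta]; omega⟩
end
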